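/- arXiv:2404.10687 — 2 statements merged into one kernel-verified Lean document; each statement's English description precedes it below -/
import Mathlib

section
/- Let A be a real m×l matrix and let B be its Moore–Penrose pseudoinverse (i.e., B is the l×m matrix with A B A = A, B A B = B, (A B)ᵀ = A B, (B A)ᵀ = B A). Then for every δ > 0 the matrix A Aᵀ + δ·I_m is invertible, and Aᵀ (A Aᵀ + δ·I_m)⁻¹ tends to B as δ tends to 0 from the right. -/
/-!
Since `B * A` is symmetric, `Aᵀ = B * (A * Aᵀ)`, so with `N δ = A * Aᵀ + δ • 1` we get
`Aᵀ * (N δ)⁻¹ = B - δ • (B * (N δ)⁻¹)`. Since `A * B` is symmetric, `B = B * Bᵀ * Aᵀ`, and feeding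
this back in solves for `B * (N δ)⁻¹ = (1 + δ • (B * Bᵀ))⁻¹ * (B * Bᵀ * B)`, which is continuous
in `δ` up to `δ = 0`; so the error term `δ • (B * (N δ)⁻¹)` tends to `0`.
-/

open Matrix Filter Topology

namespace Matrix

variable {m n : Type*} [Fintype m] [Fintype n]

theorem posSemidef_mul_transpose_self (A : Matrix m n ℝ) : (A * Aᵀ).PosSemidef := by
  rw [← conjTranspose_eq_transpose_of_trivial]
  exact posSemidef_self_mul_conjTranspose A

theorem isUnit_mul_transpose_add_smul_one [DecidableEq m] (A : Matrix m n ℝ) {δ : ℝ}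
    (hδ : 0 < δ) :
    IsUnit (A * Aᵀ + δ • (1 : Matrix m m ℝ)) :=
  (PosDef.posSemidef_add (posSemidef_mul_transpose_self A) (PosDef.one.smul hδ)).isUnit

theorem isUnit_one_add_smul_mul_transpose [DecidableEq n] (B : Matrix n m ℝ) {δ : ℝ}
    (hδ : 0 ≤ δ) :
    IsUnit (1 + δ • (B * Bᵀ)) :=
  (PosDef.one.add_posSemidef ((posSemidef_mul_transpose_self B).smul hδ)).isUnit

theorem transpose_mul_inv_mul_transpose_add_smul_one [DecidableEq m] [DecidableEq n]
    {R : Type*} [CommRing R]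
    {A : Matrix m n R} {B : Matrix n m R} {C : Matrix n n R}
    (hB : B * (A * Aᵀ) = Aᵀ) (hC : C * Aᵀ = B) {δ : R}
    (hN : IsUnit (A * Aᵀ + δ • (1 : Matrix m m R))) (hP : IsUnit (1 + δ • C)) :
    Aᵀ * (A * Aᵀ + δ • (1 : Matrix m m R))⁻¹ = B - δ • ((1 + δ • C)⁻¹ * (C * B)) := by
  set N := A * Aᵀ + δ • (1 : Matrix m m R)
  have hAN : Aᵀ * N⁻¹ = B - δ • (B * N⁻¹) := by
    calc Aᵀ * N⁻¹ = (B * N - δ • B) * N⁻¹ := by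
          rw [Matrix.mul_add, hB, Matrix.mul_smul, Matrix.mul_one, add_sub_cancel_right]
      _ = B - δ • (B * N⁻¹) := by
          rw [Matrix.sub_mul, Matrix.mul_assoc, mul_nonsing_inv N ((isUnit_iff_isUnit_det N).mp hN),
            Matrix.mul_one, Matrix.smul_mul]
  have hBN : (1 + δ • C) * (B * N⁻¹) = C * B := by
    calc (1 + δ • C) * (B * N⁻¹) = B * N⁻¹ + C * (B - Aᵀ * N⁻¹) := by
          rw [hAN, sub_sub_cancel, Matrix.add_mul, Matrix.one_mul, Matrix.smul_mul, Matrix.mul_smul]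
      _ = C * B := by
          rw [Matrix.mul_sub, ← Matrix.mul_assoc, hC, add_sub_cancel]
  rw [hAN, ← hBN, ← Matrix.mul_assoc, nonsing_inv_mul _ ((isUnit_iff_isUnit_det _).mp hP),
    Matrix.one_mul]

theorem continuousAt_inv_one_add_smul [DecidableEq n] {𝕜 : Type*} [NormedField 𝕜]
    (C : Matrix n n 𝕜) :
    ContinuousAt (fun t : 𝕜 => (1 + t • C)⁻¹) 0 := by
  refine ContinuousAt.comp (f := fun t : 𝕜 => 1 + t • C) ?_
    (continuous_const.add (continuous_id.smul continuous_const)).continuousAt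
  refine continuousAt_matrix_inv _ ?_
  simpa [Ring.inverse_eq_inv'] using continuousAt_inv₀ (one_ne_zero (α := 𝕜))

end Matrix

/-- Let `A` be a real `m × l` matrix and `B` its Moore–Penrose pseudoinverse.
Then for every `δ > 0` the matrix `A * Aᵀ + δ • 1` is invertible, and
`Aᵀ * (A * Aᵀ + δ • 1)⁻¹` tends to `B` as `δ → 0⁺`. -/
theorem pseudoinverse_limit
    {m l : ℕ}
    (A : Matrix (Fin m) (Fin l) ℝ) (B : Matrix (Fin l) (Fin m) ℝ)
    (hB1 : A * B * A = A)
    (hB2 : B * A * B = B)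
    (hB3 : (A * B)ᵀ = A * B)
    (hB4 : (B * A)ᵀ = B * A) :
    (∀ δ : ℝ, 0 < δ →
      IsUnit (A * Aᵀ + δ • (1 : Matrix (Fin m) (Fin m) ℝ))) ∧
    Filter.Tendsto
      (fun δ : ℝ => Aᵀ * (A * Aᵀ + δ • (1 : Matrix (Fin m) (Fin m) ℝ))⁻¹)
      (nhdsWithin 0 (Set.Ioi 0)) (nhds B) := by
  have hBA : B * (A * Aᵀ) = Aᵀ := by
    rw [← Matrix.mul_assoc, ← hB4, ← transpose_mul, ← Matrix.mul_assoc, hB1]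
  have hBB : B * Bᵀ * Aᵀ = B := by
    rw [Matrix.mul_assoc, ← transpose_mul, hB3, ← Matrix.mul_assoc, hB2]
  refine ⟨fun δ hδ => isUnit_mul_transpose_add_smul_one A hδ, ?_⟩
  have hlim :
      Tendsto (fun δ : ℝ => B - δ • ((1 + δ • (B * Bᵀ))⁻¹ * (B * Bᵀ * B))) (𝓝 0) (𝓝 B) := by
    have hcont : ContinuousAt (fun δ : ℝ => δ • ((1 + δ • (B * Bᵀ))⁻¹ * (B * Bᵀ * B))) 0 :=
      continuousAt_id.smul ((continuous_id.matrix_mul continuous_const).continuousAt.comp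
        (continuousAt_inv_one_add_smul (B * Bᵀ)))
    simpa using tendsto_const_nhds.sub hcont
  refine (hlim.mono_left nhdsWithin_le_nhds).congr' ?_
  filter_upwards [self_mem_nhdsWithin] with δ (hδ : 0 < δ)
  exact (transpose_mul_inv_mul_transpose_add_smul_one hBA hBB
    (isUnit_mul_transpose_add_smul_one A hδ) (isUnit_one_add_smul_mul_transpose B hδ.le)).symm
end

section
/- Fix r ∈ ℝ³, α, β ∈ ℝ, set d = (r, α, β) ∈ ℝ⁵ and H = [−(r)ₓ, α·I₃, β·I₃] ∈ ℝ^{3×9}. Let χ ∈ ℝ^{5×5} be a block matrix [R v p; 0 1 0; 0 0 1] with R ∈ SO(3) and v, p ∈ ℝ³. Then the map F : ℝ⁹ → ℝ⁵ defined by F(ξ) = χ · exp(ξ^) · d is differentiable at ξ = 0, and its derivative at 0 is the linear map ξ ↦ χ · (H ξ, 0, 0), i.e., the vector of ℝ⁵ obtained by applying χ to the 5-vector whose first three components are H ξ and whose last two components are zero. Here ξ^ ∈ ℝ^{5×5} denotes the block matrix [(φ)ₓ ν ρ; 0 0 0; 0 0 0] for ξ = (φ, ν, ρ) ∈ ℝ⁹.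 -/
/-!
The map `ξ ↦ ξ^` is linear and `exp` has derivative the identity at `0`, so by the chain rule
the derivative of `ξ ↦ χ exp(ξ^) d` at `0` is `ξ ↦ χ ξ^ d`. For `ξ = (φ, ν, ρ)` and
`d = (r, α, β)` one has `ξ^ d = ((φ)ₓ r + α ν + β ρ, 0, 0)`, and `(φ)ₓ r = φ × r = -(r × φ)`,
so `ξ^ d = (H ξ, 0, 0)`.
-/

open Matrix

noncomputable section

/-- The 3×3 skew-symmetric matrix `(b)ₓ` with `(b)ₓ u = b × u`. -/
def skew (b : Fin 3 → ℝ) : Matrix (Fin 3) (Fin 3) ℝ :=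
  !![0, -b 2, b 1; b 2, 0, -b 0; -b 1, b 0, 0]

/-- The vector `d = (r, α, β) ∈ ℝ⁵`. -/
def dVec (r : Fin 3 → ℝ) (α β : ℝ) : Fin 5 → ℝ := fun i =>
  if h : (i : ℕ) < 3 then r ⟨i, h⟩ else if (i : ℕ) = 3 then α else β

/-- The 5×5 extended-pose block matrix `[R v p; 0 1 0; 0 0 1]`. -/
def se23 (R : Matrix (Fin 3) (Fin 3) ℝ) (v p : Fin 3 → ℝ) : Matrix (Fin 5) (Fin 5) ℝ :=
  Matrix.of fun i j =>
    if hi : (i : ℕ) < 3 then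
      if hj : (j : ℕ) < 3 then R ⟨i, hi⟩ ⟨j, hj⟩
      else if (j : ℕ) = 3 then v ⟨i, hi⟩ else p ⟨i, hi⟩
    else if (i : ℕ) = (j : ℕ) then 1 else 0

/-- The 5×5 Lie-algebra block matrix `ζ^ = [(φ)ₓ ν ρ; 0 0 0; 0 0 0]`. -/
def se23hat (φ ν ρ : Fin 3 → ℝ) : Matrix (Fin 5) (Fin 5) ℝ :=
  Matrix.of fun i j =>
    if hi : (i : ℕ) < 3 then
      if hj : (j : ℕ) < 3 then skew φ ⟨i, hi⟩ ⟨j, hj⟩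
      else if (j : ℕ) = 3 then ν ⟨i, hi⟩ else ρ ⟨i, hi⟩
    else 0

/-- The measurement Jacobian `H = [−(r)ₓ, α·I₃, β·I₃] ∈ ℝ^{3×9}`. -/
def Hmat (r : Fin 3 → ℝ) (α β : ℝ) : Matrix (Fin 3) (Fin 9) ℝ :=
  Matrix.of fun i j =>
    if hj : (j : ℕ) < 3 then (-(skew r)) i ⟨j, hj⟩
    else if _ : (j : ℕ) < 6 then (if (i : ℕ) = (j : ℕ) - 3 then α else 0)
    else (if (i : ℕ) = (j : ℕ) - 6 then β else 0)

/-- The vector `ζ = (φ, ν, ρ) ∈ ℝ⁹`. -/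
def vec9 (φ ν ρ : Fin 3 → ℝ) : Fin 9 → ℝ := fun j =>
  if hj : (j : ℕ) < 3 then φ ⟨j, hj⟩
  else if hj6 : (j : ℕ) < 6 then ν ⟨(j : ℕ) - 3, by omega⟩
  else ρ ⟨(j : ℕ) - 6, by omega⟩

end

/-- The 5×5 Lie-algebra matrix `ξ^` associated to `ξ = (φ, ν, ρ) ∈ ℝ⁹`. -/
noncomputable def hat9 (ξ : Fin 9 → ℝ) : Matrix (Fin 5) (Fin 5) ℝ :=
  se23hat (fun i => ξ ⟨(i : ℕ), by have := i.isLt; omega⟩)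
    (fun i => ξ ⟨(i : ℕ) + 3, by have := i.isLt; omega⟩)
    (fun i => ξ ⟨(i : ℕ) + 6, by have := i.isLt; omega⟩)

/-- The inclusion `ℝ³ → ℝ⁵` onto the first three coordinates, as a `5 × 3` matrix. -/
def padMat : Matrix (Fin 5) (Fin 3) ℝ :=
  Matrix.of fun i j => if (i : ℕ) = (j : ℕ) then 1 else 0

section MatrixExp

-- `exp` does not depend on the norm; any Banach-algebra norm inducing the product topology will do.
attribute [local instance] Matrix.linftyOpNormedRing Matrix.linftyOpNormedAlgebra

theorem Matrix.hasFDerivAt_mul_exp_linearMap_mulVec {𝕂 E m n : Type*} [RCLike 𝕂] [Fintype m]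
    [Fintype n] [DecidableEq n] [NormedAddCommGroup E] [NormedSpace 𝕂 E]
    [FiniteDimensional 𝕂 E] (L : E →ₗ[𝕂] Matrix n n 𝕂) (χ : Matrix m n 𝕂) (d : n → 𝕂) :
    HasFDerivAt (fun ξ => (χ * NormedSpace.exp (L ξ)) *ᵥ d)
      (LinearMap.toContinuousLinearMap (χ.mulVecLin ∘ₗ (mulVecBilin 𝕂 𝕂).flip d ∘ₗ L)) 0 := by
  have hL : HasFDerivAt L (LinearMap.toContinuousLinearMap L) 0 :=
    (LinearMap.toContinuousLinearMap L).hasFDerivAt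
  have hexp : HasFDerivAt NormedSpace.exp (1 : Matrix n n 𝕂 →L[𝕂] Matrix n n 𝕂) (L 0) :=
    map_zero L ▸ hasFDerivAt_exp_zero
  have hout : HasFDerivAt (fun M => χ *ᵥ (M *ᵥ d))
      (LinearMap.toContinuousLinearMap (χ.mulVecLin ∘ₗ (mulVecBilin 𝕂 𝕂).flip d))
      (NormedSpace.exp (L 0)) :=
    (LinearMap.toContinuousLinearMap (χ.mulVecLin ∘ₗ (mulVecBilin 𝕂 𝕂).flip d)).hasFDerivAt
  simp_rw [← mulVec_mulVec]
  exact (hout.comp (0 : E) (hexp.comp (0 : E) hL)).congr_fderiv (by ext; rfl)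

end MatrixExp

theorem hat9_add (x y : Fin 9 → ℝ) : hat9 (x + y) = hat9 x + hat9 y := by
  ext i j
  fin_cases i <;> fin_cases j <;> simp [hat9, se23hat, skew] <;> ring

theorem hat9_smul (c : ℝ) (x : Fin 9 → ℝ) : hat9 (c • x) = c • hat9 x := by
  ext i j
  fin_cases i <;> fin_cases j <;> simp [hat9, se23hat, skew]

noncomputable def hat9LinearMap : (Fin 9 → ℝ) →ₗ[ℝ] Matrix (Fin 5) (Fin 5) ℝ where
  toFun := hat9
  map_add' := hat9_add
  map_smul' := hat9_smul

-- In the first three rows this is the anticommutativity `(φ)ₓ r = -(r)ₓ φ` of the cross product.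
theorem hat9_mulVec_dVec (ξ : Fin 9 → ℝ) (r : Fin 3 → ℝ) (α β : ℝ) :
    hat9 ξ *ᵥ dVec r α β = padMat *ᵥ (Hmat r α β *ᵥ ξ) := by
  ext i
  fin_cases i <;>
    simp [mulVec, dotProduct, Fin.sum_univ_succ, hat9, se23hat, skew, dVec, padMat, Hmat] <;>
    ring

theorem output_jacobian_is_Hmat_general
    (r : Fin 3 → ℝ) (α β : ℝ)
    (R : Matrix (Fin 3) (Fin 3) ℝ)
    (v p : Fin 3 → ℝ) :
    HasFDerivAt
      (fun ξ : Fin 9 → ℝ =>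
        (se23 R v p * NormedSpace.exp (hat9 ξ)).mulVec (dVec r α β))
      (LinearMap.toContinuousLinearMap
        (Matrix.mulVecLin (se23 R v p * padMat * Hmat r α β)))
      0 := by
  have hH : mulVecLin (se23 R v p * padMat * Hmat r α β) =
      (se23 R v p).mulVecLin ∘ₗ (mulVecBilin ℝ ℝ).flip (dVec r α β) ∘ₗ hat9LinearMap := by
    refine LinearMap.ext fun ξ => ?_
    change (se23 R v p * padMat * Hmat r α β) *ᵥ ξ = se23 R v p *ᵥ (hat9 ξ *ᵥ dVec r α β)
    rw [hat9_mulVec_dVec, mulVec_mulVec, mulVec_mulVec]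
  rw [hH]
  exact Matrix.hasFDerivAt_mul_exp_linearMap_mulVec hat9LinearMap (se23 R v p) (dVec r α β)

/-- **`H` is the Jacobian of the left-invariant output.** The map
`F(ξ) = χ · exp(ξ^) · d` is differentiable at `ξ = 0` with derivative
`ξ ↦ χ · (H ξ, 0, 0)`, i.e. the linear map with matrix `χ * padMat * H`. -/
theorem output_jacobian_is_Hmat
    (r : Fin 3 → ℝ) (α β : ℝ)
    (R : Matrix (Fin 3) (Fin 3) ℝ) (hR : Rᵀ * R = 1) (hdet : R.det = 1)
    (v p : Fin 3 → ℝ) :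
    HasFDerivAt
      (fun ξ : Fin 9 → ℝ =>
        (se23 R v p * NormedSpace.exp (hat9 ξ)).mulVec (dVec r α β))
      (LinearMap.toContinuousLinearMap
        (Matrix.mulVecLin (se23 R v p * padMat * Hmat r α β)))
      0 :=
  output_jacobian_is_Hmat_general r α β R v p
end
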